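/- arXiv:1808.08030 — 2 statements merged into one kernel-verified Lean document; each statement's English description precedes it below -/
import Mathlib

section
/- Let A be an n×n Bott matrix over ℤ/2 and, in the ring R = ℤ/2[x₁,…,xₙ]/(x_j² − x_j·∑ᵢ A_{ij}xᵢ), set y_j = ∑ᵢ A_{ij} xᵢ for j = 1,…,n. Then for each j, y_j² = y_j·∑ᵢ A_{ij}(∑_l A_{li} x_l) can be expanded so that the total Stiefel-Whitney class w = ∏_{j=1}ⁿ (1 + y_j) lies in the subspace of R spanned by square-free monomials. -/
open MvPolynomial

noncomputable def bottRel {n : ℕ} (A : Matrix (Fin n) (Fin n) (ZMod 2)) (j : Fin n) :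
    MvPolynomial (Fin n) (ZMod 2) :=
  X j ^ 2 - X j * ∑ i, C (A i j) * X i

noncomputable def bottIdeal {n : ℕ} (A : Matrix (Fin n) (Fin n) (ZMod 2)) :
    Ideal (MvPolynomial (Fin n) (ZMod 2)) :=
  Ideal.span (Set.range (bottRel A))

/-!
Since `A` is strictly upper triangular, the relation `x_j² = x_j · ∑_{i<j} A_{ij} x_i` rewrites a
monomial containing `x_j²` as a sum of monomials in which one factor `x_j` has been traded for
some `x_i` with `i < j`. This strictly lowers the weight `∑ᵢ mᵢ 2ⁱ` of the exponent vector `m`, so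
by well-founded induction the square-free monomials span all of `R`, and in particular contain
the total Stiefel-Whitney class.
-/

namespace Bott

open Finsupp (single weight)

variable {n : ℕ} (A : Matrix (Fin n) (Fin n) (ZMod 2))

noncomputable def squareFreeSpan :
    Submodule (ZMod 2) (MvPolynomial (Fin n) (ZMod 2) ⧸ bottIdeal A) :=
  Submodule.span (ZMod 2)
    (Set.range fun s : Finset (Fin n) => Ideal.Quotient.mk (bottIdeal A) (∏ i ∈ s, X i))

theorem mk_X_sq (j : Fin n) :
    Ideal.Quotient.mk (bottIdeal A) (X j ^ 2) =
      Ideal.Quotient.mk (bottIdeal A) (X j * ∑ i, C (A i j) * X i) :=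
  Ideal.Quotient.eq.2 (Ideal.subset_span ⟨j, rfl⟩)

theorem mk_monomial_add_single_two (m : Fin n →₀ ℕ) (j : Fin n) :
    Ideal.Quotient.mk (bottIdeal A) (monomial (m + single j 2) 1) =
      ∑ i, A i j • Ideal.Quotient.mk (bottIdeal A) (monomial (m + single j 1 + single i 1) 1) := by
  have hsplit : (monomial (m + single j 2) 1 : MvPolynomial (Fin n) (ZMod 2)) =
      monomial m 1 * X j ^ 2 := by
    rw [X_pow_eq_monomial, monomial_mul, one_mul]
  rw [hsplit, map_mul, mk_X_sq, ← map_mul, Finset.mul_sum, Finset.mul_sum, map_sum]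
  refine Finset.sum_congr rfl fun i _ => ?_
  rw [← Ideal.Quotient.mkₐ_eq_mk (ZMod 2), ← map_smul, smul_monomial, X, X, C_mul_monomial,
    monomial_mul, monomial_mul, add_assoc]
  simp

theorem monomial_eq_prod_X_of_le_one {m : Fin n →₀ ℕ} (hm : ∀ i, m i ≤ 1) :
    (monomial m 1 : MvPolynomial (Fin n) (ZMod 2)) = ∏ i ∈ m.support, X i := by
  rw [← prod_X_pow_eq_monomial]
  refine Finset.prod_congr rfl fun i hi => ?_
  rw [le_antisymm (hm i) (Nat.one_le_iff_ne_zero.2 (Finsupp.mem_support_iff.1 hi)), pow_one]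

theorem weight_add_single_lt (m : Fin n →₀ ℕ) {i j : Fin n} (hij : i < j) :
    weight (fun k : Fin n => 2 ^ (k : ℕ)) (m + single j 1 + single i 1) <
      weight (fun k : Fin n => 2 ^ (k : ℕ)) (m + single j 2) := by
  have : 2 ^ (i : ℕ) < 2 ^ (j : ℕ) := Nat.pow_lt_pow_right (by norm_num) hij
  simp only [map_add, Finsupp.weight_single, smul_eq_mul]
  omega

variable {A}

theorem mk_monomial_mem_squareFreeSpan (hA : ∀ i j : Fin n, j ≤ i → A i j = 0)
    (m : Fin n →₀ ℕ) : Ideal.Quotient.mk (bottIdeal A) (monomial m 1) ∈ squareFreeSpan A := by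
  by_cases hsq : ∀ i, m i ≤ 1
  · exact Submodule.subset_span ⟨m.support, by rw [monomial_eq_prod_X_of_le_one hsq]⟩
  obtain ⟨j, hj⟩ : ∃ j, 1 < m j := by simpa using hsq
  obtain ⟨m', hm⟩ : ∃ m', m = m' + single j 2 :=
    ⟨m - single j 2, (tsub_add_cancel_of_le (Finsupp.single_le_iff.2 hj)).symm⟩
  rw [hm, mk_monomial_add_single_two]
  refine Submodule.sum_mem _ fun i _ => ?_
  rcases lt_or_ge i j with hij | hji
  · exact Submodule.smul_mem _ _ (mk_monomial_mem_squareFreeSpan hA _)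
  · rw [hA i j hji, zero_smul]
    exact Submodule.zero_mem _
termination_by weight (fun k : Fin n => 2 ^ (k : ℕ)) m
decreasing_by exact hm ▸ weight_add_single_lt m' hij

theorem squareFreeSpan_eq_top (hA : ∀ i j : Fin n, j ≤ i → A i j = 0) :
    squareFreeSpan A = ⊤ := by
  refine Submodule.eq_top_iff'.2 fun x => ?_
  obtain ⟨p, rfl⟩ := Ideal.Quotient.mk_surjective x
  induction p using MvPolynomial.induction_on' with
  | monomial m c =>
    rw [← mul_one c, ← smul_eq_mul, ← smul_monomial, ← Ideal.Quotient.mkₐ_eq_mk (ZMod 2),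
      map_smul]
    exact Submodule.smul_mem _ _ (mk_monomial_mem_squareFreeSpan hA m)
  | add p q hp hq =>
    rw [map_add]
    exact Submodule.add_mem _ hp hq

end Bott

/-- The total Stiefel-Whitney class ∏ⱼ (1 + yⱼ), with yⱼ = ∑ᵢ Aᵢⱼ xᵢ, lies in the
span of the square-free monomials in R. -/
theorem stmt3 {n : ℕ} (A : Matrix (Fin n) (Fin n) (ZMod 2))
    (hA : ∀ i j : Fin n, j ≤ i → A i j = 0) :
    Ideal.Quotient.mk (bottIdeal A) (∏ j, (1 + ∑ i, C (A i j) * X i)) ∈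
      Submodule.span (ZMod 2)
        (Set.range fun s : Finset (Fin n) =>
          Ideal.Quotient.mk (bottIdeal A) (∏ i ∈ s, X i)) := by
  show _ ∈ Bott.squareFreeSpan A
  rw [Bott.squareFreeSpan_eq_top hA]
  exact Submodule.mem_top
end

section
/- Let A be an n×n Bott matrix over ℤ/2, and for a subset S ⊆ {1,…,n} let A_S denote the matrix obtained from A by replacing all rows with index not in S by zero rows. Define y_j(B) = ∑ᵢ B_{ij} xᵢ for a Bott matrix B, working in the free polynomial ring ℤ/2[x₁,…,xₙ]. Then the multilinear part (the sum of the square-free monomial terms) of σ_{2k}(y₁(A),…,yₙ(A)) equals the sum over all subsets S = {i₁ < ⋯ < i_{2k}} of size 2k of the multilinear part of σ_{2k}(y₁(A_S),…,yₙ(A_S)). -/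
open MvPolynomial

/-- The m-th elementary symmetric function evaluated at a family of polynomials. -/
noncomputable def esymmAt {n : ℕ} (m : ℕ) (y : Fin n → MvPolynomial (Fin n) (ZMod 2)) :
    MvPolynomial (Fin n) (ZMod 2) :=
  ∑ s ∈ Finset.univ.powersetCard m, ∏ j ∈ s, y j

/-- The multilinear part of a polynomial: the sum of its square-free monomial terms. -/
noncomputable def mlin {n : ℕ} (p : MvPolynomial (Fin n) (ZMod 2)) :
    MvPolynomial (Fin n) (ZMod 2) :=
  ∑ s : Finset (Fin n),
    monomial (∑ i ∈ s, Finsupp.single i 1) (p.coeff (∑ i ∈ s, Finsupp.single i 1))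

/-- The linear forms yⱼ = ∑ᵢ Bᵢⱼ xᵢ attached to a Bott matrix B. -/
noncomputable def yOf {n : ℕ} (B : Matrix (Fin n) (Fin n) (ZMod 2)) (j : Fin n) :
    MvPolynomial (Fin n) (ZMod 2) :=
  ∑ i, C (B i j) * X i

/-- The matrix A with all rows outside S replaced by zero. -/
def rowRestrict {n : ℕ} (A : Matrix (Fin n) (Fin n) (ZMod 2)) (S : Finset (Fin n)) :
    Matrix (Fin n) (Fin n) (ZMod 2) :=
  fun i j => if i ∈ S then A i j else 0

/-!
Killing the variables outside `S` is a ring map sending `yⱼ(A)` to `yⱼ(A_S)`, so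
`σₘ(y(A_S))` is `σₘ(y(A))` with those variables set to zero. A squarefree monomial `x_T`
survives this exactly when `T ⊆ S`. Since `σₘ(y(A))` is homogeneous of degree `m`, only
`|T| = m` contributes, and then `T ⊆ S` with `|S| = m` forces `S = T`.
-/

namespace MvPolynomial

variable {σ R : Type*} [CommSemiring R] [DecidableEq σ]

noncomputable def killOutside (S : Finset σ) : MvPolynomial σ R →ₐ[R] MvPolynomial σ R :=
  aeval fun i => if i ∈ S then X i else 0

theorem killOutside_monomial (S : Finset σ) (d : σ →₀ ℕ) (c : R) :
    killOutside S (monomial d c) = if d.support ⊆ S then monomial d c else 0 := by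
  rw [killOutside, aeval_monomial, algebraMap_eq, monomial_eq]
  split_ifs with hd
  · congr 1
    exact Finset.prod_congr rfl fun i hi => by simp only [if_pos (hd hi)]
  · obtain ⟨i, hid, hiS⟩ := Finset.not_subset.mp hd
    refine mul_eq_zero_of_right _ (Finset.prod_eq_zero hid ?_)
    simp only [if_neg hiS, zero_pow (Finsupp.mem_support_iff.mp hid)]

theorem coeff_killOutside (S : Finset σ) (d : σ →₀ ℕ) (p : MvPolynomial σ R) :
    coeff d (killOutside S p) = if d.support ⊆ S then coeff d p else 0 := by
  induction p using induction_on' with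
  | monomial e c =>
    rcases eq_or_ne e d with rfl | hne
    · rw [killOutside_monomial]
      split_ifs <;> simp
    · rw [killOutside_monomial, coeff_monomial, if_neg hne]
      split_ifs <;> simp [hne]
  | add p q hp hq =>
    rw [map_add, coeff_add, hp, hq, coeff_add]
    split_ifs <;> simp

end MvPolynomial

open MvPolynomial Finset

section

variable {n : ℕ}

theorem yOf_rowRestrict (A : Matrix (Fin n) (Fin n) (ZMod 2)) (S : Finset (Fin n)) :
    yOf (rowRestrict A S) = fun j => killOutside S (yOf A j) := by
  ext1 j
  simp only [yOf, rowRestrict, map_sum, map_mul, killOutside, aeval_C, aeval_X, algebraMap_eq]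
  refine sum_congr rfl fun i _ => ?_
  split_ifs <;> simp

theorem map_esymmAt {F : Type*} [FunLike F (MvPolynomial (Fin n) (ZMod 2))
      (MvPolynomial (Fin n) (ZMod 2))] [RingHomClass F _ _] (f : F) (m : ℕ)
    (y : Fin n → MvPolynomial (Fin n) (ZMod 2)) :
    f (esymmAt m y) = esymmAt m (fun j => f (y j)) := by
  simp only [esymmAt, map_sum, map_prod]

theorem isHomogeneous_yOf (B : Matrix (Fin n) (Fin n) (ZMod 2)) (j : Fin n) :
    (yOf B j).IsHomogeneous 1 :=
  IsHomogeneous.sum _ _ _ fun i _ => isHomogeneous_C_mul_X _ i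

theorem isHomogeneous_esymmAt (m : ℕ) {y : Fin n → MvPolynomial (Fin n) (ZMod 2)}
    (hy : ∀ j, (y j).IsHomogeneous 1) : (esymmAt m y).IsHomogeneous m :=
  IsHomogeneous.sum _ _ _ fun s hs => by
    simpa [mem_powersetCard_univ.mp hs] using
      IsHomogeneous.prod s y (fun _ => 1) fun j _ => hy j

theorem support_sum_single_one (T : Finset (Fin n)) :
    (∑ i ∈ T, Finsupp.single i 1 : Fin n →₀ ℕ).support = T := by
  ext i
  simp [Finsupp.finsetSum_apply, Finsupp.single_apply]

theorem degree_sum_single_one (T : Finset (Fin n)) :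
    (∑ i ∈ T, Finsupp.single i 1 : Fin n →₀ ℕ).degree = T.card := by
  simp [map_sum, Finsupp.degree_single]

theorem coeff_squarefree_eq_sum_coeff_killOutside {m : ℕ} {p : MvPolynomial (Fin n) (ZMod 2)}
    (hp : p.IsHomogeneous m) (T : Finset (Fin n)) :
    coeff (∑ i ∈ T, Finsupp.single i 1) p =
      ∑ S ∈ univ.powersetCard m, coeff (∑ i ∈ T, Finsupp.single i 1) (killOutside S p) := by
  simp only [coeff_killOutside, support_sum_single_one]
  by_cases hT : T.card = m
  · rw [sum_eq_single_of_mem T (mem_powersetCard_univ.mpr hT), if_pos subset_rfl]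
    intro S hS hST
    exact if_neg fun hTS => hST (eq_of_subset_of_card_le hTS
      (by rw [hT, mem_powersetCard_univ.mp hS])).symm
  · rw [hp.coeff_eq_zero (by rwa [degree_sum_single_one])]
    simp

theorem mlin_eq_sum_mlin_killOutside {m : ℕ} {p : MvPolynomial (Fin n) (ZMod 2)}
    (hp : p.IsHomogeneous m) :
    mlin p = ∑ S ∈ univ.powersetCard m, mlin (killOutside S p) := by
  simp only [mlin]
  rw [sum_comm]
  refine sum_congr rfl fun T _ => ?_
  rw [← map_sum, ← coeff_squarefree_eq_sum_coeff_killOutside hp]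

end

theorem stmt6_general {n k : ℕ} (A : Matrix (Fin n) (Fin n) (ZMod 2)) :
    mlin (esymmAt (2 * k) (yOf A)) =
      ∑ S ∈ Finset.univ.powersetCard (2 * k),
        mlin (esymmAt (2 * k) (yOf (rowRestrict A S))) := by
  simpa only [yOf_rowRestrict, map_esymmAt] using
    mlin_eq_sum_mlin_killOutside (isHomogeneous_esymmAt (2 * k) (isHomogeneous_yOf A))

/-- The multilinear part of σ₂ₖ(y₁(A),…,yₙ(A)) equals the sum over all size-2k subsets S
of the multilinear part of σ₂ₖ(y₁(A_S),…,yₙ(A_S)). -/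
theorem stmt6 {n k : ℕ} (A : Matrix (Fin n) (Fin n) (ZMod 2))
    (hA : ∀ i j : Fin n, j ≤ i → A i j = 0) :
    mlin (esymmAt (2 * k) (yOf A)) =
      ∑ S ∈ Finset.univ.powersetCard (2 * k),
        mlin (esymmAt (2 * k) (yOf (rowRestrict A S))) :=
  stmt6_general A
end
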